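/- There exist unique integers n_h(g), indexed by natural numbers g ≥ 0 and h ≥ 0, with n_h(g) = 0 for all but finitely many h for each fixed g, such that in the ring ℤ[t,t⁻¹][[q]] of formal power series in q with Laurent-polynomial coefficients one has Σ_{g≥0} ( Σ_{h≥0} n_h(g)·(2 − t − t⁻¹)^h ) q^g = ∏_{n≥1} (1 − t q^n)^{−2} (1 − t⁻¹ q^n)^{−2} (1 − q^n)^{−8}, where each factor (1 − t q^n)^{−1}, (1 − t⁻¹ q^n)^{−1}, (1 − q^n)^{−1} is the geometric-series inverse and the infinite product converges coefficientwise (each factor is ≡ 1 mod q^n). -/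

import Mathlib

open LaurentPolynomial

/-- The geometric-series inverse `Σ_{k≥0} c^k q^{nk}` of `(1 − c qⁿ)` in `ℤ[t,t⁻¹][[q]]`. -/
noncomputable def geomInv (c : LaurentPolynomial ℤ) (n : ℕ) :
    PowerSeries (LaurentPolynomial ℤ) :=
  PowerSeries.mk fun m => if n ∣ m then c ^ (m / n) else 0

/-- The infinite product `∏_{n≥1} (1 − t qⁿ)⁻²(1 − t⁻¹ qⁿ)⁻²(1 − qⁿ)⁻⁸` in
`ℤ[t,t⁻¹][[q]]`, converging coefficientwise: since the `n`-th factor is `≡ 1 mod qⁿ`,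
the coefficient of `q^N` equals that of the finite product over `1 ≤ n ≤ N`. -/
noncomputable def BPSProduct : PowerSeries (LaurentPolynomial ℤ) :=
  PowerSeries.mk fun N =>
    PowerSeries.coeff N (∏ n ∈ Finset.Icc 1 N,
      geomInv (T 1) n ^ 2 * geomInv (T (-1)) n ^ 2 * geomInv 1 n ^ 8)

/-- Coefficient access for Laurent polynomials. -/
noncomputable instance : CoeFun (LaurentPolynomial ℤ) (fun _ => ℤ → ℤ) := ⟨fun p => p.coeff⟩

/-! ### Auxiliary material: the Laurent polynomial `s = 2 − t − t⁻¹` and its powers -/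

/-- The Laurent polynomial `2 − t − t⁻¹`. -/
noncomputable def sB : LaurentPolynomial ℤ := (2 : LaurentPolynomial ℤ) - T 1 - T (-1)

lemma T_mul_apply (a : ℤ) (f : LaurentPolynomial ℤ) (n : ℤ) :
    (T a * f : LaurentPolynomial ℤ) n = f (n - a) := by
  rw [show (T a : LaurentPolynomial ℤ) = AddMonoidAlgebra.single a 1 from rfl]
  rw [AddMonoidAlgebra.coeff_single_mul_apply, one_mul, neg_add_eq_sub]

lemma sB_mul_apply (f : LaurentPolynomial ℤ) (n : ℤ) :
    (sB * f) n = f n + f n - f (n - 1) - f (n + 1) := by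
  have h : sB * f = f + f - T 1 * f - T (-1) * f := by rw [sB]; ring
  rw [h, AddMonoidAlgebra.coeff_sub, AddMonoidAlgebra.coeff_sub, AddMonoidAlgebra.coeff_add, Finsupp.sub_apply, Finsupp.sub_apply, Finsupp.add_apply, T_mul_apply, T_mul_apply,
    sub_neg_eq_add]

lemma one_apply' (n : ℤ) : (1 : LaurentPolynomial ℤ) n = if n = 0 then 1 else 0 := by
  rw [← T_zero, T_apply]; simp [eq_comm]

lemma sB_pow_apply_of_lt : ∀ (h : ℕ) (n : ℤ), h < n.natAbs → (sB ^ h) n = 0 := by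
  intro h
  induction h with
  | zero => intro n hn; rw [pow_zero, one_apply', if_neg (by omega)]
  | succ d ih =>
    intro n hn
    rw [pow_succ', sB_mul_apply, ih n (by omega), ih (n - 1) (by omega),
      ih (n + 1) (by omega)]
    ring

lemma sB_pow_apply_self (h : ℕ) : (sB ^ h) (h : ℤ) = (-1) ^ h := by
  induction h with
  | zero => simp [one_apply']
  | succ d ih =>
    rw [pow_succ', sB_mul_apply, sB_pow_apply_of_lt d ((d : ℕ) + 1 : ℕ) (by omega),
      sB_pow_apply_of_lt d (((d : ℕ) + 1 : ℕ) + 1) (by omega),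
      show (((d : ℕ) + 1 : ℕ) : ℤ) - 1 = (d : ℤ) by push_cast; ring, ih]
    ring

lemma invert_sB : invert sB = sB := by
  rw [sB]
  rw [map_sub, map_sub, invert_T, invert_T, map_ofNat]
  ring

lemma sB_pow_symm (k : ℕ) (n : ℤ) : (sB ^ k) (-n) = (sB ^ k) n := by
  have h1 : invert (sB ^ k) = sB ^ k := by rw [map_pow, invert_sB]
  calc (sB ^ k) (-n) = invert (sB ^ k) n := (invert_apply _ n).symm
    _ = (sB ^ k) n := by rw [h1]

lemma finsum_smul_apply (c : ℕ → ℤ) (hc : (Function.support c).Finite) (n : ℤ) :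
    (∑ᶠ h, c h • sB ^ h) n = ∑ h ∈ hc.toFinset, c h * (sB ^ h) n := by
  rw [finsum_eq_sum_of_support_subset _
    (show Function.support (fun h => c h • sB ^ h) ⊆ (hc.toFinset : Set ℕ) by
      intro h hh
      simp only [Finset.coe_sort_coe, Set.Finite.coe_toFinset, Function.mem_support] at *
      intro h0; exact hh (by rw [h0, zero_smul]))]
  rw [AddMonoidAlgebra.coeff_sum, Finset.sum_apply']
  refine Finset.sum_congr rfl fun h _ => ?_
  rw [AddMonoidAlgebra.coeff_smul, Finsupp.smul_apply, smul_eq_mul]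

lemma combo_inj {c : ℕ → ℤ} (hc : (Function.support c).Finite)
    (h0 : ∑ᶠ h, c h • sB ^ h = 0) : c = 0 := by
  by_contra hne
  have hne' : hc.toFinset.Nonempty := by
    rcases Function.ne_iff.mp hne with ⟨h, hh⟩
    exact ⟨h, by simpa using hh⟩
  set H := hc.toFinset.max' hne' with hH
  have hcH : c H ≠ 0 := by
    have := hc.toFinset.max'_mem hne'
    simpa using this
  have h1 : (∑ᶠ h, c h • sB ^ h) (H : ℤ) = c H * (-1) ^ H := by
    rw [finsum_smul_apply c hc]
    rw [Finset.sum_eq_single H]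
    · rw [sB_pow_apply_self]
    · intro b hb hbH
      have hle : b ≤ H := hc.toFinset.le_max' b hb
      rw [sB_pow_apply_of_lt b (H : ℤ) (by omega), mul_zero]
    · intro hH'; exact absurd (hc.toFinset.max'_mem hne') hH'
  rw [h0] at h1
  simp only [AddMonoidAlgebra.coeff_zero, Finsupp.coe_zero, Pi.zero_apply] at h1
  rcases mul_eq_zero.mp h1.symm with h | h
  · exact hcH h
  · exact pow_ne_zero H (by norm_num) h

lemma exists_rep : ∀ (d : ℕ) (p : LaurentPolynomial ℤ), (∀ n : ℤ, p (-n) = p n) →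
    (∀ n : ℤ, d < n.natAbs → p n = 0) →
    ∃ c : ℕ → ℤ, (∀ h, d < h → c h = 0) ∧ ∑ᶠ h, c h • sB ^ h = p := by
  intro d
  induction d with
  | zero =>
    intro p _ hbd
    refine ⟨fun h => if h = 0 then p 0 else 0, fun h hh => if_neg (by omega), ?_⟩
    rw [finsum_eq_single _ 0 (fun b hb => by simp [hb])]
    show (if (0:ℕ) = 0 then p 0 else 0) • sB ^ 0 = p
    rw [if_pos rfl, pow_zero]
    ext n
    rw [AddMonoidAlgebra.coeff_smul, Finsupp.smul_apply, one_apply', smul_eq_mul]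
    by_cases hn : n = 0
    · rw [if_pos hn, mul_one, hn]
    · rw [if_neg hn, mul_zero, hbd n (by omega)]
  | succ d ih =>
    intro p hsym hbd
    set a : ℤ := (-1) ^ (d + 1) * p ((d : ℤ) + 1) with ha
    set q : LaurentPolynomial ℤ := p - a • sB ^ (d + 1) with hq
    have hqapp : ∀ n : ℤ, q n = p n - a * (sB ^ (d + 1)) n := by
      intro n; rw [hq, AddMonoidAlgebra.coeff_sub, AddMonoidAlgebra.coeff_smul, Finsupp.sub_apply, Finsupp.smul_apply, smul_eq_mul]
    have hqsym : ∀ n : ℤ, q (-n) = q n := by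
      intro n; rw [hqapp, hqapp, hsym, sB_pow_symm]
    have hqbd : ∀ n : ℤ, d < n.natAbs → q n = 0 := by
      have hqtop : q ((d : ℤ) + 1) = 0 := by
        have hcast : (sB ^ (d + 1)) ((d : ℤ) + 1) = (-1) ^ (d + 1) := by
          rw [show ((d : ℤ) + 1) = ((d + 1 : ℕ) : ℤ) by push_cast; ring, sB_pow_apply_self]
        rw [hqapp, hcast, ha]
        have h2 : ((-1 : ℤ) ^ (d + 1)) ^ 2 = 1 := by
          rw [← pow_mul]; exact Even.neg_one_pow ⟨d + 1, by ring⟩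
        linear_combination (-(p ((d : ℤ) + 1))) * h2
      intro n hn
      by_cases h1 : d + 1 < n.natAbs
      · rw [hqapp, hbd n h1, sB_pow_apply_of_lt (d + 1) n h1, mul_zero, sub_zero]
      · have : n = (d : ℤ) + 1 ∨ n = -((d : ℤ) + 1) := by omega
        rcases this with rfl | rfl
        · exact hqtop
        · rw [hqsym]; exact hqtop
    obtain ⟨c', hc'bd, hc'⟩ := ih q hqsym hqbd
    refine ⟨fun h => c' h + (if h = d + 1 then a else 0), fun h hh => ?_, ?_⟩
    · show c' h + (if h = d + 1 then a else 0) = 0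
      rw [hc'bd h (by omega), if_neg (by omega), add_zero]
    · have hsplit : (fun h => (c' h + (if h = d + 1 then a else 0)) • sB ^ h)
          = fun h => c' h • sB ^ h + (if h = d + 1 then a else 0) • sB ^ h := by
        funext h; rw [add_smul]
      rw [hsplit, finsum_add_distrib]
      · rw [hc', finsum_eq_single _ (d + 1) (fun b hb => by simp [hb])]
        show q + (if d + 1 = d + 1 then a else 0) • sB ^ (d + 1) = p
        rw [if_pos rfl, hq, sub_add_cancel]
      · refine (Set.finite_Iic d).subset fun h hh => ?_
        simp only [Function.mem_support, Set.mem_Iic] at *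
        by_contra hgt
        exact hh (by rw [hc'bd h (by omega), zero_smul])
      · refine (Set.finite_singleton (d + 1)).subset fun h hh => ?_
        simp only [Function.mem_support, Set.mem_singleton_iff] at *
        by_contra hne
        exact hh (by rw [if_neg hne, zero_smul])

lemma exists_combo (p : LaurentPolynomial ℤ) (hp : ∀ n : ℤ, p (-n) = p n) :
    ∃ c : ℕ → ℤ, (Function.support c).Finite ∧ ∑ᶠ h, c h • sB ^ h = p := by
  set d := p.coeff.support.sup Int.natAbs with hd
  obtain ⟨c, hcbd, hc⟩ := exists_rep d p hp (fun n hn => by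
    by_contra h0
    exact absurd (Finset.le_sup (f := Int.natAbs) (Finsupp.mem_support_iff.mpr h0)) (by omega))
  exact ⟨c, (Set.finite_Iic d).subset fun h hh => by
    simp only [Function.mem_support, Set.mem_Iic] at *
    by_contra hgt; exact hh (hcbd h (by omega)), hc⟩

/-! ### Symmetry of the coefficients of `BPSProduct` under `t ↦ t⁻¹` -/

/-- The inversion `t ↦ t⁻¹` as a ring homomorphism. -/
noncomputable def ψ : LaurentPolynomial ℤ →+* LaurentPolynomial ℤ :=
  (invert (R := ℤ)).toRingEquiv.toRingHom

lemma ψ_apply (f : LaurentPolynomial ℤ) : ψ f = invert f := rfl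

lemma map_geomInv (c : LaurentPolynomial ℤ) (n : ℕ) :
    PowerSeries.map ψ (geomInv c n) = geomInv (ψ c) n := by
  ext m
  simp [geomInv, PowerSeries.coeff_map, apply_ite ψ, map_pow]

lemma BPS_coeff_symm (N : ℕ) (n : ℤ) :
    (PowerSeries.coeff N BPSProduct) (-n)
      = (PowerSeries.coeff N BPSProduct) n := by
  set P : PowerSeries (LaurentPolynomial ℤ) := ∏ n ∈ Finset.Icc 1 N,
      geomInv (T 1) n ^ 2 * geomInv (T (-1)) n ^ 2 * geomInv 1 n ^ 8 with hP
  have hmap : PowerSeries.map ψ P = P := by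
    rw [hP, map_prod]
    refine Finset.prod_congr rfl fun k _ => ?_
    rw [map_mul, map_mul, map_pow, map_pow, map_pow, map_geomInv, map_geomInv, map_geomInv]
    have h1 : ψ (T 1) = T (-1) := by rw [ψ_apply, invert_T]
    have h2 : ψ (T (-1)) = T 1 := by rw [ψ_apply, invert_T, neg_neg]
    have h3 : ψ (1 : LaurentPolynomial ℤ) = 1 := map_one ψ
    rw [h1, h2, h3]
    ring
  have hco : invert (PowerSeries.coeff N BPSProduct)
      = PowerSeries.coeff N BPSProduct := by
    have hB : PowerSeries.coeff N BPSProduct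
        = PowerSeries.coeff N P := by
      rw [BPSProduct, PowerSeries.coeff_mk]
    rw [hB, ← ψ_apply, ← PowerSeries.coeff_map, hmap]
  conv_rhs => rw [← hco]
  rw [invert_apply]

/-- There exist unique integers `n_h(g)` (`nn g h`), finitely many nonzero in `h` for each
`g`, with `Σ_g (Σ_h n_h(g) (2 − t − t⁻¹)^h) q^g = ∏_{n≥1} (1−tqⁿ)⁻²(1−t⁻¹qⁿ)⁻²(1−qⁿ)⁻⁸`
in `ℤ[t,t⁻¹][[q]]`. -/
theorem BPS_invariants_exist_unique :
    ∃! nn : ℕ → ℕ → ℤ,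
      (∀ g, (Function.support (nn g)).Finite) ∧
      (PowerSeries.mk fun g =>
          ∑ᶠ h : ℕ, nn g h • ((2 : LaurentPolynomial ℤ) - T 1 - T (-1)) ^ h)
        = BPSProduct := by
  have H : ∀ g : ℕ, ∃ c : ℕ → ℤ, (Function.support c).Finite ∧
      ∑ᶠ h, c h • sB ^ h = PowerSeries.coeff g BPSProduct :=
    fun g => exists_combo _ (BPS_coeff_symm g)
  choose nn h1 h2 using H
  have hsB : ((2 : LaurentPolynomial ℤ) - T 1 - T (-1)) = sB := rfl
  refine ⟨nn, ⟨h1, ?_⟩, ?_⟩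
  · refine PowerSeries.ext fun g => ?_
    rw [PowerSeries.coeff_mk, hsB]
    exact h2 g
  · rintro y ⟨hy1, hy2⟩
    funext g
    have he : ∑ᶠ h, y g h • sB ^ h = ∑ᶠ h, nn g h • sB ^ h := by
      have hc := congrArg (fun φ => PowerSeries.coeff g φ) hy2
      simp only [PowerSeries.coeff_mk] at hc
      rw [hsB] at hc
      exact hc.trans (h2 g).symm
    have hfin1 : (Function.support fun h => y g h • sB ^ h).Finite :=
      (hy1 g).subset fun h hh => by
        simp only [Function.mem_support] at *
        intro h0; exact hh (by rw [h0, zero_smul])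
    have hfin2 : (Function.support fun h => nn g h • sB ^ h).Finite :=
      (h1 g).subset fun h hh => by
        simp only [Function.mem_support] at *
        intro h0; exact hh (by rw [h0, zero_smul])
    have hz : ∑ᶠ h, (y g h - nn g h) • sB ^ h = 0 := by
      have hsplit : (fun h => (y g h - nn g h) • sB ^ h)
          = fun h => y g h • sB ^ h - nn g h • sB ^ h := by
        funext h; rw [sub_smul]
      rw [hsplit, finsum_sub_distrib hfin1 hfin2, he, sub_self]
    have hfin : (Function.support fun h => y g h - nn g h).Finite :=
      ((hy1 g).union (h1 g)).subset fun h hh => by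
        simp only [Function.mem_support, Set.mem_union] at *
        by_contra hcon
        push_neg at hcon
        exact hh (by rw [hcon.1, hcon.2, sub_self])
    have hzero := combo_inj hfin hz
    funext h
    have := congrFun hzero h
    simp only [Pi.zero_apply] at this
    linarith [this]
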